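/- (Example, value function.) Let a > 0, b ≠ 0 be real numbers and T > 0, and set x₁ = (1 − e^{−aT})|b|/a. For the scalar system dx/dt = a x + b u, for every ξ ∈ [−x₁, x₁], the value function of the sparse optimal control problem satisfies V₀(ξ) = −(1/a) log(1 − a|ξ|/|b|), where V₀(ξ) = inf{‖u‖₀ : u ∈ U(ξ)} (in particular V₀(0) = 0). -/

import Mathlib

open MeasureTheory

noncomputable section

/-- A scalar control: measurable with `|u t| ≤ 1` a.e. on `[0, T]`. -/
def IsControl (T : ℝ) (u : ℝ → ℝ) : Prop :=
  Measurable u ∧ ∀ᵐ t ∂(volume.restrict (Set.Icc (0:ℝ) T)), |u t| ≤ 1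

/-- `∫₀ᵀ e^{−as} b u(s) ds` for the scalar system `dx/dt = a x + b u`. -/
def steer (a b T : ℝ) (u : ℝ → ℝ) : ℝ :=
  ∫ s in Set.Icc (0:ℝ) T, Real.exp (-(a * s)) * b * u s

/-- The reachable set `R(T)` for the scalar system. -/
def ReachSet (a b T : ℝ) : Set ℝ :=
  {x | ∃ u, IsControl T u ∧ x = steer a b T u}

/-- Admissible controls for initial state `ξ`: `ξ = −∫₀ᵀ e^{−as} b u(s) ds`. -/
def Adm (a b T : ℝ) (ξ : ℝ) : Set (ℝ → ℝ) :=
  {u | IsControl T u ∧ ξ = -(steer a b T u)}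

/-- The support of `u`: closure of `{t ∈ [0,T] : u t ≠ 0}`. -/
def sparseSupp (T : ℝ) (u : ℝ → ℝ) : Set ℝ :=
  closure {t ∈ Set.Icc (0:ℝ) T | u t ≠ 0}

/-- `L⁰` "norm": Lebesgue measure of the support. -/
def L0norm (T : ℝ) (u : ℝ → ℝ) : ℝ := (volume (sparseSupp T u)).toReal

/-- Value function of the sparse optimal control problem. -/
def V0 (a b T : ℝ) (ξ : ℝ) : ℝ := sInf (L0norm T '' Adm a b T ξ)

/-! The `L⁰` norm of an admissible control `u` is at least the measure `m` of `{u ≠ 0}`. Since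
`|u| ≤ 1` and the weight `e^{-as}` is decreasing, the bathtub principle bounds
`|ξ| = |∫₀ᵀ e^{-as} b u(s) ds|` by `|b| ∫₀ᵐ e^{-as} ds = |b| (1 - e^{-am}) / a`; solving for `m`
gives `V₀(ξ) ≥ -(1/a) log (1 - a|ξ|/|b|) =: τ`. The constant control `∓1` on `[0, τ]` (or `0` when
`ξ = 0`) is admissible and has support of measure `τ`. -/

open Set Real

theorem integral_Icc_exp_neg_mul {a : ℝ} (ha : a ≠ 0) {m : ℝ} (hm : 0 ≤ m) :
    ∫ s in Icc 0 m, exp (-(a * s)) = (1 - exp (-(a * m))) / a := by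
  simp_rw [integral_Icc_eq_integral_Ioc, ← intervalIntegral.integral_of_le hm, ← neg_mul,
    intervalIntegral.integral_comp_mul_left (fun s => exp s) (neg_ne_zero.mpr ha),
    integral_exp, mul_zero, exp_zero, smul_eq_mul]
  field_simp
  ring

theorem setIntegral_le_integral_Icc_of_antitoneOn {f : ℝ → ℝ} {S : Set ℝ}
    (hf : AntitoneOn f (Ici 0)) (hS : MeasurableSet S) (hS0 : S ⊆ Ici 0)
    (hSfin : volume S ≠ ⊤) (hfS : IntegrableOn f S) :
    ∫ s in S, f s ≤ ∫ s in Icc 0 (volume S).toReal, f s := by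
  set m := (volume S).toReal
  set I := Icc 0 m
  have hm : 0 ≤ m := ENNReal.toReal_nonneg
  have hIfin : volume I ≠ ⊤ := by simp [I]
  have hfI : IntegrableOn f I := (hf.mono Icc_subset_Ici_self).integrableOn_isCompact isCompact_Icc
  have hvol : volume (S \ I) = volume (I \ S) :=
    measure_sdiff_symm hS.nullMeasurableSet measurableSet_Icc.nullMeasurableSet
      (by simp [I, Real.volume_Icc, m, ENNReal.ofReal_toReal hSfin])
      (measure_ne_top_of_subset inter_subset_left hSfin)
  have hout : ∫ s in S \ I, f s ≤ ∫ s in S \ I, f m := by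
    refine setIntegral_mono_on (hfS.mono_set sdiff_subset)
      (integrableOn_const (measure_ne_top_of_subset sdiff_subset hSfin))
      (hS.diff measurableSet_Icc) fun s ⟨hsS, hsI⟩ => hf (mem_Ici.mpr hm) (hS0 hsS) ?_
    by_contra! h
    exact hsI ⟨hS0 hsS, h.le⟩
  have hin : ∫ s in I \ S, f m ≤ ∫ s in I \ S, f s :=
    setIntegral_mono_on (integrableOn_const (measure_ne_top_of_subset sdiff_subset hIfin))
      (hfI.mono_set sdiff_subset) (measurableSet_Icc.diff hS)
      fun s ⟨hsI, _⟩ => hf hsI.1 (mem_Ici.mpr hm) hsI.2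
  rw [← integral_inter_add_sdiff (t := I) measurableSet_Icc hfS,
    ← integral_inter_add_sdiff (t := S) hS hfI, inter_comm]
  simp only [setIntegral_const, measureReal_def, hvol, smul_eq_mul] at hout hin
  linarith

theorem neg_inv_mul_log_one_sub_mul_mem_Icc {a q L : ℝ} (ha : 0 < a) (hq : 0 ≤ q)
    (hqL : q ≤ (1 - exp (-(a * L))) / a) : -(1 / a) * log (1 - a * q) ∈ Icc 0 L := by
  have hexp : exp (-(a * L)) ≤ 1 - a * q := by
    rw [le_div_iff₀ ha] at hqL
    linarith
  have hpos : 0 < 1 - a * q := (exp_pos _).trans_le hexp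
  have hlog : -(a * L) ≤ log (1 - a * q) := by
    simpa using log_le_log (exp_pos _) hexp
  constructor
  · exact mul_nonneg_of_nonpos_of_nonpos (by simp [ha.le]) (log_nonpos hpos.le (by nlinarith))
  · rw [show -(1 / a) * log (1 - a * q) = -log (1 - a * q) / a by ring, div_le_iff₀ ha]
    linarith

theorem one_sub_exp_neg_mul_neg_inv_mul_log {a q : ℝ} (ha : a ≠ 0) (h : a * q < 1) :
    (1 - exp (-(a * (-(1 / a) * log (1 - a * q))))) / a = q := by
  have : -(a * (-(1 / a) * log (1 - a * q))) = log (1 - a * q) := by field_simp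
  rw [this, exp_log (by linarith)]
  field_simp
  ring

theorem exists_abs_le_one_mul_abs_div_abs {y : ℝ} (hy : y ≠ 0) (x : ℝ) :
    ∃ c, |c| ≤ 1 ∧ y * c * (|x| / |y|) = x := by
  rcases eq_or_ne x 0 with rfl | hx
  · exact ⟨0, by simp⟩
  · refine ⟨x * |y| / (y * |x|), ?_, ?_⟩
    · rw [abs_div, abs_mul, abs_mul, abs_abs, abs_abs, mul_comm, div_self (by positivity)]
    · field_simp

section Controls

variable {a b T : ℝ} {u : ℝ → ℝ}

theorem abs_steer_le (hu : IsControl T u) :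
    |steer a b T u| ≤ |b| * ∫ s in {t ∈ Icc 0 T | u t ≠ 0}, exp (-(a * s)) := by
  set S := {t ∈ Icc 0 T | u t ≠ 0}
  have hST : S ⊆ Icc 0 T := sep_subset _ _
  have hsteer : steer a b T u = ∫ s in S, exp (-(a * s)) * b * u s :=
    setIntegral_eq_of_subset_of_forall_sdiff_eq_zero measurableSet_Icc hST
      fun t ⟨ht, htS⟩ => by simp [not_not.mp fun h => htS ⟨ht, h⟩]
  have hbound : ∀ᵐ s ∂volume.restrict S, ‖exp (-(a * s)) * b * u s‖ ≤ exp (-(a * s)) * |b| := by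
    filter_upwards [ae_restrict_of_ae_restrict_of_subset hST hu.2] with s hs
    rw [Real.norm_eq_abs, abs_mul, abs_mul, abs_exp]
    exact mul_le_of_le_one_right (by positivity) hs
  have hint : IntegrableOn (fun s => exp (-(a * s)) * |b|) S :=
    (Continuous.integrableOn_Icc (by fun_prop)).mono_set hST
  rw [hsteer, ← Real.norm_eq_abs, mul_comm, ← integral_mul_const]
  exact norm_integral_le_of_norm_le hint hbound

theorem volume_toReal_le_L0norm :
    (volume {t ∈ Icc 0 T | u t ≠ 0}).toReal ≤ L0norm T u := by
  have hsupp : sparseSupp T u ⊆ Icc 0 T := closure_minimal (sep_subset _ _) isClosed_Icc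
  exact ENNReal.toReal_mono (measure_ne_top_of_subset hsupp (by simp))
    (measure_mono subset_closure)

theorem abs_steer_le_L0norm (ha : 0 < a) (hu : IsControl T u) :
    |steer a b T u| ≤ |b| * ((1 - exp (-(a * L0norm T u))) / a) := by
  set S := {t ∈ Icc 0 T | u t ≠ 0}
  have hS : MeasurableSet S := measurableSet_Icc.inter (hu.1 (measurableSet_singleton 0).compl)
  have hST : S ⊆ Icc 0 T := sep_subset _ _
  have hanti : AntitoneOn (fun s => exp (-(a * s))) (Ici 0) := fun s _ t _ hst =>
    exp_le_exp.mpr (neg_le_neg (mul_le_mul_of_nonneg_left hst ha.le))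
  have hbathtub : ∫ s in S, exp (-(a * s)) ≤ ∫ s in Icc 0 (volume S).toReal, exp (-(a * s)) :=
    setIntegral_le_integral_Icc_of_antitoneOn hanti hS (hST.trans Icc_subset_Ici_self)
      (measure_ne_top_of_subset hST (by simp))
      ((Continuous.integrableOn_Icc (by fun_prop)).mono_set hST)
  calc |steer a b T u|
      ≤ |b| * ∫ s in S, exp (-(a * s)) := abs_steer_le hu
    _ ≤ |b| * ((1 - exp (-(a * (volume S).toReal))) / a) := by
      rw [← integral_Icc_exp_neg_mul ha.ne' ENNReal.toReal_nonneg]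
      exact mul_le_mul_of_nonneg_left hbathtub (abs_nonneg b)
    _ ≤ |b| * ((1 - exp (-(a * L0norm T u))) / a) := by
      gcongr
      exact volume_toReal_le_L0norm

variable {c τ : ℝ}

theorem isControl_indicator_Icc (hc : |c| ≤ 1) :
    IsControl T ((Icc 0 τ).indicator fun _ => c) := by
  refine ⟨measurable_const.indicator measurableSet_Icc, ae_of_all _ fun t => ?_⟩
  by_cases ht : t ∈ Icc 0 τ <;> simp [ht, hc]

theorem steer_indicator_Icc (ha : a ≠ 0) (hτ : 0 ≤ τ) (hτT : τ ≤ T) :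
    steer a b T ((Icc 0 τ).indicator fun _ => c) = b * c * ((1 - exp (-(a * τ))) / a) := by
  have : ∀ s, exp (-(a * s)) * b * (Icc 0 τ).indicator (fun _ => c) s =
      (Icc 0 τ).indicator (fun s => exp (-(a * s)) * (b * c)) s := by
    intro s
    by_cases hs : s ∈ Icc 0 τ <;> simp [hs, mul_assoc]
  simp only [steer, this]
  rw [setIntegral_indicator measurableSet_Icc, inter_eq_self_of_subset_right
    (Icc_subset_Icc le_rfl hτT), integral_mul_const, integral_Icc_exp_neg_mul ha hτ]
  ring

theorem L0norm_indicator_Icc_le (hτ : 0 ≤ τ) :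
    L0norm T ((Icc 0 τ).indicator fun _ => c) ≤ τ := by
  have hsupp : sparseSupp T ((Icc 0 τ).indicator fun _ => c) ⊆ Icc 0 τ :=
    closure_minimal (fun t ⟨_, ht⟩ => by_contra fun h => ht (by simp [h])) isClosed_Icc
  calc L0norm T ((Icc 0 τ).indicator fun _ => c)
      ≤ (volume (Icc 0 τ)).toReal := ENNReal.toReal_mono (by simp) (measure_mono hsupp)
    _ = τ := by simp [hτ]

end Controls

theorem V0_formula_general (T a b : ℝ) (ha : 0 < a) (hb : b ≠ 0) :
    ∀ ξ ∈ Set.Icc (-((1 - Real.exp (-(a * T))) * |b| / a))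
        ((1 - Real.exp (-(a * T))) * |b| / a),
      V0 a b T ξ = -(1 / a) * Real.log (1 - a * |ξ| / |b|) := by
  intro ξ hξ
  have hb' : 0 < |b| := abs_pos.mpr hb
  have hqT : |ξ| / |b| ≤ (1 - exp (-(a * T))) / a := by
    rw [div_le_iff₀' hb', ← mul_div_assoc, mul_comm]
    exact abs_le.mpr hξ
  rw [mul_div_assoc]
  set τ := -(1 / a) * log (1 - a * (|ξ| / |b|))
  have lower : ∀ v ∈ Adm a b T ξ, τ ≤ L0norm T v := by
    rintro v ⟨hv, hξv⟩
    refine (neg_inv_mul_log_one_sub_mul_mem_Icc ha (by positivity) ?_).2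
    rw [div_le_iff₀' hb', hξv, abs_neg]
    exact abs_steer_le_L0norm ha hv
  obtain ⟨hτ0, hτT⟩ := neg_inv_mul_log_one_sub_mul_mem_Icc ha (by positivity) hqT
  obtain ⟨c, hc, hbc⟩ := exists_abs_le_one_mul_abs_div_abs hb (-ξ)
  set u := (Icc 0 τ).indicator fun _ => c
  have hu : u ∈ Adm a b T ξ := by
    refine ⟨isControl_indicator_Icc hc, ?_⟩
    rw [steer_indicator_Icc ha.ne' hτ0 hτT, one_sub_exp_neg_mul_neg_inv_mul_log ha.ne' ?_,
      ← abs_neg, hbc, neg_neg]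
    linarith [(le_div_iff₀' ha).mp hqT, exp_pos (-(a * T))]
  have hLu : L0norm T u = τ := (L0norm_indicator_Icc_le hτ0).antisymm (lower u hu)
  exact IsLeast.csInf_eq ⟨⟨u, hu, hLu⟩, fun _ ⟨v, hv, hLv⟩ => hLv ▸ lower v hv⟩

/-- Example, value function: for `ξ ∈ [−x₁, x₁]`,
`V₀(ξ) = −(1/a) log (1 − a |ξ| / |b|)`. -/
theorem V0_formula (T a b : ℝ) (hT : 0 < T) (ha : 0 < a) (hb : b ≠ 0) :
    ∀ ξ ∈ Set.Icc (-((1 - Real.exp (-(a * T))) * |b| / a))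
        ((1 - Real.exp (-(a * T))) * |b| / a),
      V0 a b T ξ = -(1 / a) * Real.log (1 - a * |ξ| / |b|) :=
  V0_formula_general T a b ha hb
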